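/- Let ◁ be an inductively generated basic cover on a set A = B/R arising from a quotient of B by an equivalence relation R, with axiom set I : A → Type, C : (a : A) → I a → Set A. Define a new axiom set on B by I^R(b) = I([b]) ⊕ {y : B // R b y} and C^R(b, inl j) = {x ∈ B | [x] ∈ C([b], j)}, C^R(b, inr ⟨y, _⟩) = {y}. Then for every subset W ⊆ B/R that is a fixpoint of the cover ◁_{I,C}, the subset es(W) = {b ∈ B | [b] ∈ W} is a fixpoint of the cover ◁^R generated on B by (I^R, C^R). -/

import Mathlib

inductive Cover {A : Type*} (I : A → Type*) (C : ∀ a, I a → Set A) (V : Set A) : A → Prop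
  | rf {a : A} : a ∈ V → Cover I C V a
  | tr {a : A} (i : I a) : (∀ y ∈ C a i, Cover I C V y) → Cover I C V a

/-! The fixpoints of an inductively generated cover are exactly the subsets saturated under its
axioms: those containing `a` as soon as they contain some `C a i`. So it suffices to check that
`es W` is saturated for `(I^R, C^R)`. An axiom `inl j` at `b` is handled by the saturation of `W`
at `⟦b⟧`, and an axiom `inr ⟨y, _⟩` by `⟦b⟧ = ⟦y⟧`. -/

namespace Cover

variable {A : Type*} {I : A → Type*}

def Saturated (C : ∀ a, I a → Set A) (V : Set A) : Prop :=
  ∀ a i, C a i ⊆ V → a ∈ V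

variable {C : ∀ a, I a → Set A} {V : Set A}

theorem mem_of_saturated (hV : Saturated C V) {a : A} (h : Cover I C V a) : a ∈ V := by
  induction h with
  | rf ha => exact ha
  | tr i _ ih => exact hV _ i ih

theorem setOf_eq_iff_saturated : {a | Cover I C V a} = V ↔ Saturated C V := by
  constructor
  · intro hV a i hi
    rw [← hV]
    exact Cover.tr i fun y hy => Cover.rf (hi hy)
  · intro hV
    exact Set.Subset.antisymm (fun _ => mem_of_saturated hV) fun _ => Cover.rf

end Cover

theorem Cover.saturated_preimage_quotientMk.{u, v} {B : Type u} (sR : Setoid B)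
    {I : Quotient sR → Type v} {C : ∀ a, I a → Set (Quotient sR)}
    {IR : B → Type (max u v)} (hIR : ∀ b, IR b = (I ⟦b⟧ ⊕ {y : B // sR.r b y}))
    {CR : ∀ b, IR b → Set B}
    (hCR : ∀ b j, CR b j =
      Sum.elim (fun j : I ⟦b⟧ => {x : B | (⟦x⟧ : Quotient sR) ∈ C ⟦b⟧ j})
               (fun y : {y : B // sR.r b y} => {y.1}) (cast (hIR b) j))
    {W : Set (Quotient sR)} (hW : Saturated C W) :
    Saturated CR {b : B | (⟦b⟧ : Quotient sR) ∈ W} := by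
  intro b i hi
  rw [hCR] at hi
  generalize cast (hIR b) i = k at hi
  rcases k with j | ⟨y, hy⟩
  · refine hW _ j fun z hz => ?_
    obtain ⟨x, rfl⟩ := Quotient.exists_rep z
    exact hi hz
  · show ⟦b⟧ ∈ W
    rw [Quotient.sound hy]
    exact hi rfl

theorem stmt6.{u, v} {B : Type u} (sR : Setoid B)
    (I : Quotient sR → Type v) (C : ∀ a, I a → Set (Quotient sR))
    (IR : B → Type (max u v)) (hIR : ∀ b, IR b = (I ⟦b⟧ ⊕ {y : B // sR.r b y}))
    (CR : ∀ b, IR b → Set B)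
    (hCR : ∀ b j, CR b j =
      Sum.elim (fun j : I ⟦b⟧ => {x : B | (⟦x⟧ : Quotient sR) ∈ C ⟦b⟧ j})
               (fun y : {y : B // sR.r b y} => {y.1}) (cast (hIR b) j))
    (W : Set (Quotient sR)) (hW : {z | Cover I C W z} = W) :
    {x | Cover IR CR {b : B | (⟦b⟧ : Quotient sR) ∈ W} x} = {b : B | (⟦b⟧ : Quotient sR) ∈ W} :=
  Cover.setOf_eq_iff_saturated.2 <|
    Cover.saturated_preimage_quotientMk sR hIR hCR (Cover.setOf_eq_iff_saturated.1 hW)
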